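/- arXiv:1605.00089 — 6 statements merged into one kernel-verified Lean document; each statement's English description precedes it below -/
import Mathlib

section
/- Let G = (V,E) be a finite simple graph and let C ⊆ V be a nonempty subset with the property that every nonempty proper subset C' ⊊ C satisfies |E(C', V∖C')| > |E(C, V∖C)| (i.e., C is an ℓ-extreme set for ℓ = |E(C, V∖C)|). Then the induced subgraph G[C] is connected. -/
open Finset

/-- `cut G S` is the number of edges of `G` with exactly one endpoint in `S`,
counted as ordered pairs `(u, v)` with `u ∈ S`, `v ∉ S` and `G.Adj u v`. -/
def cut {V : Type*} [Fintype V] [DecidableEq V] (G : SimpleGraph V) [DecidableRel G.Adj]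
    (S : Finset V) : ℕ :=
  (Finset.univ.filter fun p : V × V => G.Adj p.1 p.2 ∧ p.1 ∈ S ∧ p.2 ∉ S).card

/-- If `C` is a nonempty `ℓ`-extreme set (every nonempty proper subset of `C` has a
strictly larger edge-cut than `C` itself), then the induced subgraph `G[C]` is connected. -/
theorem extreme_set_induced_connected {V : Type*} [Fintype V] [DecidableEq V]
    (G : SimpleGraph V) [DecidableRel G.Adj] (C : Finset V) (hC : C.Nonempty)
    (hext : ∀ C' : Finset V, C' ⊆ C → C'.Nonempty → C' ≠ C → cut G C' > cut G C) :
    (G.induce (C : Set V)).Connected := by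
  classical
  rw [SimpleGraph.connected_iff]
  obtain ⟨x0, hx0⟩ := hC
  refine ⟨?_, ⟨⟨x0, by simpa using hx0⟩⟩⟩
  by_contra hpre
  rw [SimpleGraph.Preconnected] at hpre
  push_neg at hpre
  obtain ⟨x, y, hxy⟩ := hpre
  set A : Finset V := C.filter
    (fun v => ∃ h : v ∈ (C : Set V), (G.induce (C : Set V)).Reachable x ⟨v, h⟩) with hA
  have hAsub : A ⊆ C := filter_subset _ _
  have hAmem : ∀ v (h : v ∈ (C : Set V)),
      v ∈ A ↔ (G.induce (C : Set V)).Reachable x ⟨v, h⟩ := by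
    intro v h
    simp only [hA, mem_filter]
    constructor
    · rintro ⟨-, h', hr⟩; exact hr
    · intro hr; exact ⟨h, h, hr⟩
  have hxA : (x : V) ∈ A := (hAmem x x.2).2 (by rfl)
  have hAne : A.Nonempty := ⟨x, hxA⟩
  have hyA : (y : V) ∉ A := by
    intro hy
    exact hxy ((hAmem y y.2).1 hy)
  have hAneC : A ≠ C := by
    intro h
    apply hyA
    rw [h]
    simp
  -- no edges from A to C \ A
  have key : ∀ u v, G.Adj u v → u ∈ A → v ∈ C → v ∈ A := by
    intro u v huv hu hv
    have hu' : u ∈ (C : Set V) := by simpa using hAsub hu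
    have hv' : v ∈ (C : Set V) := by simpa using hv
    have hr : (G.induce (C : Set V)).Reachable x ⟨u, hu'⟩ := (hAmem u hu').1 hu
    have hadj : (G.induce (C : Set V)).Adj ⟨u, hu'⟩ ⟨v, hv'⟩ := by
      simpa using huv
    exact (hAmem v hv').2 (hr.trans hadj.reachable)
  -- cut A ≤ cut C
  have hle : cut G A ≤ cut G C := by
    apply card_le_card
    intro p hp
    simp only [mem_filter, mem_univ, true_and] at hp ⊢
    obtain ⟨hadj, h1, h2⟩ := hp
    refine ⟨hadj, hAsub h1, fun hC2 => h2 (key p.1 p.2 hadj h1 hC2)⟩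
  exact absurd (hext A hAsub hAne hAneC) (not_lt.mpr hle)
end

section
/- Let k ≥ 1 and s ≥ 1 be integers with k dividing s. Let H be a finite simple graph on a vertex set of size s in which every vertex has degree at most k − 1, and let w assign a nonnegative real weight to each vertex. Then there exists an independent set I of H with |I| = s/k such that k · Σ_{i∈I} w(i) ≤ Σ_{v ∈ V(H)} w(v). -/
open Finset

namespace SimpleGraph

variable {V : Type*} [DecidableEq V] (H : SimpleGraph V) [H.LocallyFinite]

/-- Greedy selection: take a vertex `v` of minimum weight in `A`, discard a `k`-set `T ⊆ A`
containing `v` and its neighbours in `A`, and recurse on `A \ T`. Minimality gives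
`k * w v ≤ ∑ i ∈ T, w i`. -/
theorem exists_isIndepSet_subset_card_eq_mul_sum_le {k : ℕ} (hk : 0 < k)
    (hdeg : ∀ v, H.degree v < k) (w : V → ℝ) (hw : ∀ v, 0 ≤ w v) (n : ℕ) (A : Finset V)
    (hA : n * k ≤ #A) :
    ∃ I ⊆ A, H.IsIndepSet I ∧ #I = n ∧ (k : ℝ) * ∑ i ∈ I, w i ≤ ∑ i ∈ A, w i := by
  induction n generalizing A with
  | zero => exact ⟨∅, empty_subset A, by simp, rfl, by simpa using sum_nonneg fun i _ ↦ hw i⟩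
  | succ n ih =>
    rw [Nat.succ_mul] at hA
    obtain ⟨v, hvA, hv_min⟩ := A.exists_min_image w (card_pos.mp (by omega))
    have hnbhd : #(insert v (A ∩ H.neighborFinset v)) ≤ k :=
      calc #(insert v (A ∩ H.neighborFinset v))
          ≤ #(A ∩ H.neighborFinset v) + 1 := card_insert_le _ _
        _ ≤ H.degree v + 1 := by
          rw [← card_neighborFinset_eq_degree]; gcongr; exact inter_subset_right
        _ ≤ k := hdeg v
    obtain ⟨T, hvT, hTA, hT⟩ := exists_subsuperset_card_eq
      (insert_subset hvA inter_subset_left) hnbhd (by omega)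
    obtain ⟨I, hIA, hI, hIcard, hIw⟩ := ih (A \ T) <| by
      rw [card_sdiff_of_subset hTA, hT]; omega
    have hvI : v ∉ I := fun h ↦ (mem_sdiff.mp (hIA h)).2 (hvT (mem_insert_self v _))
    have hv_nonadj : ∀ i ∈ I, ¬H.Adj v i := fun i hi hadj ↦ by
      obtain ⟨hiA, hiT⟩ := mem_sdiff.mp (hIA hi)
      exact hiT <| hvT <| mem_insert_of_mem <|
        mem_inter.mpr ⟨hiA, (H.mem_neighborFinset v i).mpr hadj⟩
    have hTw : (k : ℝ) * w v ≤ ∑ i ∈ T, w i := by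
      simpa [hT] using card_nsmul_le_sum T w (w v) fun i hi ↦ hv_min i (hTA hi)
    refine ⟨insert v I, insert_subset hvA (hIA.trans sdiff_subset), ?_, ?_, ?_⟩
    · rw [coe_insert, isIndepSet_iff, Set.pairwise_insert]
      exact ⟨hI, fun i hi _ ↦ ⟨hv_nonadj i hi, fun hadj ↦ hv_nonadj i hi hadj.symm⟩⟩
    · rw [card_insert_of_notMem hvI, hIcard]
    · rw [sum_insert hvI, mul_add, ← sum_sdiff hTA]
      linarith

end SimpleGraph

theorem exists_independent_set_small_weight_general {V : Type*} [Fintype V] [DecidableEq V]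
    (H : SimpleGraph V) [DecidableRel H.Adj] (k s : ℕ) (hk : 1 ≤ k)
    (hcard : Fintype.card V = s) (hdvd : k ∣ s)
    (hdeg : ∀ v : V, H.degree v ≤ k - 1)
    (w : V → ℝ) (hw : ∀ v : V, 0 ≤ w v) :
    ∃ I : Finset V, (∀ i ∈ I, ∀ j ∈ I, i ≠ j → ¬ H.Adj i j) ∧ I.card = s / k ∧
      (k : ℝ) * ∑ i ∈ I, w i ≤ ∑ v : V, w v := by
  obtain ⟨I, -, hI, hIcard, hIw⟩ :=
    H.exists_isIndepSet_subset_card_eq_mul_sum_le hk (fun v ↦ by have := hdeg v; omega) w hw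
      (s / k) univ (by rw [card_univ, hcard, Nat.div_mul_cancel hdvd])
  exact ⟨I, fun i hi j hj hij ↦ hI hi hj hij, hIcard, hIw⟩

/-- In a graph `H` on `s` vertices with maximum degree at most `k - 1` and nonnegative
vertex weights `w`, where `k ∣ s`, there is an independent set `I` of exactly `s / k`
vertices whose total weight is at most a `1/k` fraction of the total weight. -/
theorem exists_independent_set_small_weight {V : Type*} [Fintype V] [DecidableEq V]
    (H : SimpleGraph V) [DecidableRel H.Adj] (k s : ℕ) (hk : 1 ≤ k) (hs : 1 ≤ s)
    (hcard : Fintype.card V = s) (hdvd : k ∣ s)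
    (hdeg : ∀ v : V, H.degree v ≤ k - 1)
    (w : V → ℝ) (hw : ∀ v : V, 0 ≤ w v) :
    ∃ I : Finset V, (∀ i ∈ I, ∀ j ∈ I, i ≠ j → ¬ H.Adj i j) ∧ I.card = s / k ∧
      (k : ℝ) * ∑ i ∈ I, w i ≤ ∑ v : V, w v :=
  exists_independent_set_small_weight_general H k s hk hcard hdvd hdeg w hw
end

section
/- Let p ∈ (0,1] be a real number, let s ≥ 1 be an integer, let n > 0 be a real number, and let a_1, …, a_s be positive real numbers with Σ_{i=1}^s a_i ≤ n. Then Π_{i=1}^s (1 − p^{a_i}) ≤ exp(−s · p^{n/s}). -/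
open Finset Real

/-- For `p ∈ (0,1]` and positive reals `a₁, …, a_s` summing to at most `n > 0`,
`∏ i, (1 - p ^ (a i)) ≤ exp (-s * p ^ (n / s))`. -/
theorem prod_one_sub_rpow_le_exp (p : ℝ) (hp0 : 0 < p) (hp1 : p ≤ 1)
    (s : ℕ) (hs : 1 ≤ s) (n : ℝ) (hn : 0 < n)
    (a : Fin s → ℝ) (ha : ∀ i, 0 < a i) (hsum : ∑ i, a i ≤ n) :
    ∏ i, (1 - p ^ (a i)) ≤ Real.exp (-(s : ℝ) * p ^ (n / (s : ℝ))) := by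
  have hs0 : (0 : ℝ) < s := by exact_mod_cast hs
  have hle1 : ∀ i, p ^ (a i) ≤ 1 := fun i =>
    Real.rpow_le_one hp0.le hp1 (ha i).le
  have step1 : ∏ i, (1 - p ^ (a i)) ≤ Real.exp (-∑ i, p ^ (a i)) := by
    calc ∏ i, (1 - p ^ (a i)) ≤ ∏ i, Real.exp (-(p ^ (a i))) := by
          apply Finset.prod_le_prod
          · intro i _; linarith [hle1 i]
          · intro i _
            linarith [Real.add_one_le_exp (-(p ^ (a i)))]
      _ = Real.exp (∑ i, -(p ^ (a i))) := (Real.exp_sum _ _).symm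
      _ = Real.exp (-∑ i, p ^ (a i)) := by rw [Finset.sum_neg_distrib]
  have amgm := Real.geom_mean_le_arith_mean_weighted Finset.univ
    (fun _ : Fin s => 1 / (s : ℝ)) (fun i => p ^ (a i))
    (fun i _ => by positivity)
    (by simp [Finset.card_univ]; field_simp)
    (fun i _ => (Real.rpow_pos_of_pos hp0 _).le)
  have hprod : ∏ i, (p ^ (a i)) ^ ((1 : ℝ) / s) = p ^ ((∑ i, a i) / s) := by
    have : ∀ i : Fin s, (p ^ (a i)) ^ ((1 : ℝ) / s) = p ^ (a i / s) := by
      intro i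
      rw [← Real.rpow_mul hp0.le]
      ring_nf
    simp_rw [this, ← Real.rpow_sum_of_pos hp0, Finset.sum_div]
  rw [hprod] at amgm
  rw [← Finset.mul_sum] at amgm
  have hmono : p ^ (n / (s : ℝ)) ≤ p ^ ((∑ i, a i) / s) :=
    Real.rpow_le_rpow_of_exponent_ge hp0 hp1 (by gcongr)
  have key : (s : ℝ) * p ^ (n / (s : ℝ)) ≤ ∑ i, p ^ (a i) := by
    have h2 : (s : ℝ) * p ^ ((∑ i, a i) / s) ≤ ∑ i, p ^ (a i) := by
      have := mul_le_mul_of_nonneg_left amgm hs0.le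
      rw [← mul_assoc, mul_one_div_cancel hs0.ne', one_mul] at this
      exact this
    calc (s : ℝ) * p ^ (n / (s : ℝ)) ≤ (s : ℝ) * p ^ ((∑ i, a i) / s) := by
          exact mul_le_mul_of_nonneg_left hmono hs0.le
      _ ≤ _ := h2
  refine step1.trans (Real.exp_le_exp.mpr ?_)
  rw [neg_mul]
  linarith
end

section
/- Let W ≥ 2 be an integer and let G be a connected finite simple graph on n vertices with edge weights w : E → {1, 2, …, W}. For each ℓ with 1 ≤ ℓ ≤ W, let G^{(ℓ)} denote the spanning subgraph of G consisting of all edges of weight at most ℓ, and let cc^{(ℓ)} denote the number of connected components of G^{(ℓ)}. Then the weight of a minimum spanning tree of G satisfies c(MST) = n − W + Σ_{ℓ=1}^{W−1} cc^{(ℓ)}. -/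
/-! Writing `w e = 1 + #{ℓ ∈ [1, W-1] | ℓ < w e}`, a spanning tree `T` has weight
`|T| + ∑ₗ #{e ∈ T | ℓ < w e}`. The edges of `T` of weight at most `ℓ` form a forest `T⁽ˡ⁾`,
and a forest has `#edges + #components = n`, so `#{e ∈ T | ℓ < w e} = cc(T⁽ˡ⁾) - 1` and
`w(T) = n - W + ∑ₗ cc(T⁽ˡ⁾)`. As `T⁽ˡ⁾ ≤ G⁽ˡ⁾`, this is at least the claimed value. Kruskal's
construction, extending a spanning forest of `G⁽ˡ⁾` to one of `G⁽ˡ⁺¹⁾` level by level, gives a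
spanning tree with `cc(T⁽ˡ⁾) = cc(G⁽ˡ⁾)` at every level at once. -/

open Finset

lemma Finset.sum_eq_card_add_sum_card_filter_lt {ι : Type*} (s : Finset ι) {w : ι → ℕ} {W : ℕ}
    (hw : ∀ i ∈ s, 1 ≤ w i ∧ w i ≤ W) :
    ∑ i ∈ s, w i = #s + ∑ ℓ ∈ Icc 1 (W - 1), #{i ∈ s | ℓ < w i} := by
  have hlayer : ∀ i ∈ s, w i = 1 + #{ℓ ∈ Icc 1 (W - 1) | ℓ < w i} := by
    intro i hi
    obtain ⟨h1, h2⟩ := hw i hi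
    have : {ℓ ∈ Icc 1 (W - 1) | ℓ < w i} = Icc 1 (w i - 1) := by
      ext ℓ
      simp only [mem_filter, mem_Icc]
      omega
    rw [this, Nat.card_Icc]
    omega
  simp only [sum_congr rfl hlayer, sum_add_distrib, card_filter, sum_const, smul_eq_mul, mul_one]
  rw [sum_comm]

namespace SimpleGraph

variable {V : Type*}

lemma card_connectedComponent_congr {H K : SimpleGraph V} (h : H.Reachable = K.Reachable) :
    Nat.card H.ConnectedComponent = Nat.card K.ConnectedComponent := by
  unfold ConnectedComponent
  rw [h]

lemma card_connectedComponent_bot :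
    Nat.card (⊥ : SimpleGraph V).ConnectedComponent = Nat.card V :=
  (Nat.card_eq_of_bijective (⊥ : SimpleGraph V).connectedComponentMk
    ⟨fun _ _ h => reachable_bot.mp (ConnectedComponent.exact h),
      fun c => c.ind fun v => ⟨v, rfl⟩⟩).symm

lemma Connected.card_connectedComponent {H : SimpleGraph V} (h : H.Connected) :
    Nat.card H.ConnectedComponent = 1 := by
  have := h.preconnected.subsingleton_connectedComponent
  have := h.nonempty
  exact Nat.card_unique

lemma Reachable.elim_sup_edge {H : SimpleGraph V} {a b u v : V}
    (h : (H ⊔ edge a b).Reachable u v) :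
    H.Reachable u v ∨ (H.Reachable u a ∧ H.Reachable b v) ∨
      (H.Reachable u b ∧ H.Reachable a v) := by
  obtain ⟨p⟩ := h
  induction p with
  | nil => exact Or.inl .rfl
  | cons hxy _ ih =>
    rw [sup_adj, edge_adj] at hxy
    rcases hxy with hxy | ⟨⟨rfl, rfl⟩ | ⟨rfl, rfl⟩, -⟩
    · have := hxy.reachable
      grind [Reachable.trans]
    · grind [Reachable.trans, Reachable.symm, Reachable.refl]
    · grind [Reachable.trans, Reachable.symm, Reachable.refl]

lemma card_connectedComponent_sup_edge [Finite V] {H : SimpleGraph V} {a b : V}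
    (h : ¬H.Reachable a b) :
    Nat.card (H ⊔ edge a b).ConnectedComponent + 1 = Nat.card H.ConnectedComponent := by
  set φ := ConnectedComponent.map (Hom.ofLE (le_sup_left : H ≤ H ⊔ edge a b))
  set cb := H.connectedComponentMk b
  have hinj : Set.InjOn φ {cb}ᶜ := by
    intro c hc d hd
    induction c using ConnectedComponent.ind with | h u => ?_
    induction d using ConnectedComponent.ind with | h v => ?_
    simp only [Set.mem_compl_singleton_iff, ne_eq, ConnectedComponent.eq, φ, cb,
      ConnectedComponent.map_mk, Hom.coe_ofLE, id] at hc hd ⊢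
    intro huv
    rcases huv.elim_sup_edge with huv | ⟨-, hbv⟩ | ⟨hub, -⟩
    exacts [huv, absurd hbv.symm hd, absurd hub hc]
  have hsurj : φ '' {cb}ᶜ = Set.univ := by
    refine Set.eq_univ_of_forall fun c => ?_
    induction c using ConnectedComponent.ind with | h v => ?_
    by_cases hvb : H.Reachable v b
    · refine ⟨H.connectedComponentMk a, fun hab => h (ConnectedComponent.exact hab), ?_⟩
      have hne : a ≠ b := by rintro rfl; exact h .rfl
      have hab : (H ⊔ edge a b).Adj a b := Or.inr (by simp [edge_adj, hne])
      exact ConnectedComponent.sound (hab.reachable.trans (hvb.symm.mono le_sup_left))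
    · exact ⟨H.connectedComponentMk v, fun hv => hvb (ConnectedComponent.exact hv), rfl⟩
  have hcard := hinj.ncard_image
  rw [hsurj, Set.ncard_univ, Set.ncard_compl, Set.ncard_singleton] at hcard
  have : 0 < Nat.card H.ConnectedComponent := by
    have := Nonempty.intro cb
    exact Nat.card_pos
  omega

lemma deleteEdges_sup_edge_of_adj {H : SimpleGraph V} {a b : V} (h : H.Adj a b) :
    H.deleteEdges {s(a, b)} ⊔ edge a b = H := by
  ext u v
  simp only [sup_adj, deleteEdges_adj, edge_adj, Set.mem_singleton_iff, Sym2.eq_iff]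
  grind [Adj.ne, Adj.symm]

theorem IsAcyclic.card_connectedComponent_add_ncard_edgeSet [Finite V] {H : SimpleGraph V}
    (hH : H.IsAcyclic) : Nat.card H.ConnectedComponent + H.edgeSet.ncard = Nat.card V := by
  induction hn : H.edgeSet.ncard generalizing H with
  | zero =>
    rw [Set.ncard_eq_zero, edgeSet_eq_empty] at hn
    rw [hn, card_connectedComponent_bot, add_zero]
  | succ n ih =>
    obtain ⟨e, he⟩ := Set.nonempty_of_ncard_ne_zero (s := H.edgeSet) (by omega)
    induction e using Sym2.ind with | h a b => ?_
    have hbridge : ¬(H.deleteEdges {s(a, b)}).Reachable a b :=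
      isBridge_iff.mp (isAcyclic_iff_forall_isBridge.mp hH he)
    have hcard := card_connectedComponent_sup_edge hbridge
    rw [deleteEdges_sup_edge_of_adj he] at hcard
    have := ih (hH.anti (deleteEdges_le _)) (by
      rw [edgeSet_deleteEdges, Set.ncard_sdiff_singleton_of_mem he, hn, Nat.add_sub_cancel])
    omega

theorem IsTree.sum_eq_card_sub_add_sum_card_connectedComponent [Fintype V] {T : SimpleGraph V}
    (hT : T.IsTree) {E : Finset (Sym2 V)} (hE : T.edgeSet = E) {w : Sym2 V → ℕ} {W : ℕ}
    (hW : 1 ≤ W) (hw : ∀ e ∈ E, 1 ≤ w e ∧ w e ≤ W) :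
    (∑ e ∈ E, w e : ℤ) = Fintype.card V - W + ∑ ℓ ∈ Icc 1 (W - 1),
      (Nat.card (T.deleteEdges {e | ℓ < w e}).ConnectedComponent : ℤ) := by
  have hforest (ℓ : ℕ) : Nat.card (T.deleteEdges {e | ℓ < w e}).ConnectedComponent
      + #{e ∈ E | w e ≤ ℓ} = Fintype.card V := by
    have := IsAcyclic.card_connectedComponent_add_ncard_edgeSet
      (hT.isAcyclic.anti (deleteEdges_le {e | ℓ < w e}))
    convert this using 2
    · rw [edgeSet_deleteEdges, hE, ← Set.ncard_coe_finset, coe_filter]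
      congr 1
      ext e
      simp
    · exact Nat.card_eq_fintype_card.symm
  have htree : 1 + #E = Fintype.card V := by
    have := hT.isAcyclic.card_connectedComponent_add_ncard_edgeSet
    rwa [hT.connected.card_connectedComponent, hE, Set.ncard_coe_finset,
      Nat.card_eq_fintype_card] at this
  have hlevel (ℓ : ℕ) : (#{e ∈ E | ℓ < w e} : ℤ) =
      Nat.card (T.deleteEdges {e | ℓ < w e}).ConnectedComponent - 1 := by
    have := card_filter_add_card_filter_not (s := E) (p := fun e => w e ≤ ℓ)
    simp only [not_le] at this
    have := hforest ℓ
    omega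
  rw [← Nat.cast_sum, E.sum_eq_card_add_sum_card_filter_lt hw]
  push_cast
  rw [sum_congr rfl fun ℓ _ => hlevel ℓ, sum_sub_distrib, sum_const, Nat.card_Icc]
  simp only [nsmul_eq_mul, mul_one]
  have : ((W - 1 + 1 - 1 : ℕ) : ℤ) = W - 1 := by omega
  rw [this]
  omega

theorem exists_isAcyclic_le_forall_reachable_inf_eq_of_monotone {G : ℕ → SimpleGraph V}
    (hG : Monotone G) (k : ℕ) :
    ∃ F ≤ G k, F.IsAcyclic ∧ ∀ ℓ ≤ k, (F ⊓ G ℓ).Reachable = (G ℓ).Reachable := by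
  induction k with
  | zero =>
    obtain ⟨F, hFG, hF, hreach⟩ := (G 0).exists_isAcyclic_reachable_eq_le
    refine ⟨F, hFG, hF, fun ℓ hℓ => ?_⟩
    rwa [Nat.le_zero.mp hℓ, inf_eq_left.mpr hFG]
  | succ k ih =>
    obtain ⟨F, hFG, hF, hreach⟩ := ih
    obtain ⟨F', hFF', hF'G, hF', hreach'⟩ :=
      exists_isAcyclic_reachable_eq_le_of_le_of_isAcyclic (hFG.trans (hG k.le_succ)) hF
    refine ⟨F', hF'G, hF', fun ℓ hℓ => ?_⟩
    rcases hℓ.lt_or_eq with hℓ | rfl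
    · refine le_antisymm (fun u v h => h.mono inf_le_right) ?_
      rw [← hreach ℓ (Nat.lt_succ_iff.mp hℓ)]
      exact fun u v h => h.mono (inf_le_inf_right _ hFF')
    · rwa [inf_eq_left.mpr hF'G]

lemma inf_deleteEdges_of_le {T G : SimpleGraph V} (h : T ≤ G) (s : Set (Sym2 V)) :
    T ⊓ G.deleteEdges s = T.deleteEdges s := by
  rw [deleteEdges, deleteEdges, ← inf_sdiff_assoc, inf_eq_left.mpr h]

theorem Connected.exists_isTree_le_forall_reachable_deleteEdges_eq {G : SimpleGraph V}
    (hG : G.Connected) {w : Sym2 V → ℕ} {W : ℕ} (hw : ∀ e ∈ G.edgeSet, w e ≤ W) :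
    ∃ T ≤ G, T.IsTree ∧ ∀ ℓ ≤ W,
      (T.deleteEdges {e | ℓ < w e}).Reachable = (G.deleteEdges {e | ℓ < w e}).Reachable := by
  obtain ⟨T, hTG, hT, hreach⟩ := exists_isAcyclic_le_forall_reachable_inf_eq_of_monotone
    (G := fun ℓ => G.deleteEdges {e | ℓ < w e})
    (fun ℓ m hℓm => deleteEdges_anti fun e he => hℓm.trans_lt he) W
  have hGW : G.deleteEdges {e | W < w e} = G :=
    deleteEdges_eq_self.mpr (Set.disjoint_left.mpr fun e he => (hw e he).not_gt)
  rw [hGW] at hTG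
  have hTreach := hreach W le_rfl
  rw [hGW, inf_eq_left.mpr hTG] at hTreach
  have := hG.nonempty
  refine ⟨T, hTG, ⟨⟨fun u v => hTreach ▸ hG.preconnected u v⟩, hT⟩, fun ℓ hℓ => ?_⟩
  rw [← hreach ℓ hℓ, inf_deleteEdges_of_le hTG]

lemma edgeSet_fromEdgeSet_of_subset {G : SimpleGraph V} {s : Set (Sym2 V)} (h : s ⊆ G.edgeSet) :
    (fromEdgeSet s).edgeSet = s := by
  rw [edgeSet_fromEdgeSet]
  exact Set.disjoint_left.mpr (fun e he => G.edgeSet_subset_compl_diagSet (h he)) |>.sdiff_eq_left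

end SimpleGraph

open SimpleGraph

theorem mst_weight_eq_card_sub_add_components_general {V : Type*} [Fintype V]
    (G : SimpleGraph V) [DecidableRel G.Adj] (hG : G.Connected)
    (W : ℕ) (hW : 2 ≤ W) (w : Sym2 V → ℕ)
    (hw : ∀ e ∈ G.edgeSet, 1 ≤ w e ∧ w e ≤ W)
    (cMST : ℕ)
    (hmin : IsLeast {x : ℕ | ∃ F : Finset (Sym2 V), F ⊆ G.edgeFinset ∧
        (SimpleGraph.fromEdgeSet (↑F : Set (Sym2 V))).Connected ∧
        (SimpleGraph.fromEdgeSet (↑F : Set (Sym2 V))).IsAcyclic ∧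
        x = ∑ e ∈ F, w e} cMST) :
    (cMST : ℤ) = (Fintype.card V : ℤ) - W + ∑ ℓ ∈ Finset.Icc 1 (W - 1),
      (Nat.card (G.deleteEdges {e | ℓ < w e}).ConnectedComponent : ℤ) := by
  classical
  have hweight {T : SimpleGraph V} (hTG : T ≤ G) (hT : T.IsTree) {E : Finset (Sym2 V)}
      (hE : T.edgeSet = E) := hT.sum_eq_card_sub_add_sum_card_connectedComponent hE (by omega)
    fun e he => hw e (edgeSet_mono hTG (hE ▸ he))
  refine le_antisymm ?upper ?lower
  case upper =>
    obtain ⟨T, hTG, hT, hreach⟩ :=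
      hG.exists_isTree_le_forall_reachable_deleteEdges_eq fun e he => (hw e he).2
    have := hmin.2 ⟨T.edgeFinset, edgeFinset_mono hTG, by simpa using hT.connected,
      by simpa using hT.isAcyclic, rfl⟩
    calc (cMST : ℤ) ≤ ∑ e ∈ T.edgeFinset, (w e : ℤ) := by exact_mod_cast this
      _ = _ := by
        rw [hweight hTG hT (coe_edgeFinset T).symm]
        congr! 2 with ℓ hℓ
        exact congrArg _ (card_connectedComponent_congr (hreach ℓ (by simp at hℓ; omega)))
  case lower =>
    obtain ⟨F, hFG, hFconn, hFac, rfl⟩ := hmin.1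
    have hFsub : (↑F : Set (Sym2 V)) ⊆ G.edgeSet := by rwa [← coe_edgeFinset, coe_subset]
    have hFle : fromEdgeSet (↑F : Set (Sym2 V)) ≤ G :=
      G.fromEdgeSet_le.mpr (Set.sdiff_subset.trans hFsub)
    push_cast
    rw [hweight hFle ⟨hFconn, hFac⟩ (edgeSet_fromEdgeSet_of_subset hFsub)]
    gcongr with ℓ
    exact ConnectedComponent.card_le_card_of_le (deleteEdges_mono hFle)

/-- For a connected graph `G` on `n` vertices with integer edge weights in `{1,…,W}`,
letting `cc^{(ℓ)}` denote the number of connected components of the subgraph `G^{(ℓ)}`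
of edges of weight at most `ℓ`, the minimum spanning tree weight satisfies
`c(MST) = n - W + ∑_{ℓ=1}^{W-1} cc^{(ℓ)}`. A spanning tree is represented by its set
`F` of edges: `F ⊆ E(G)` and the graph with edge set `F` is connected and acyclic. -/
theorem mst_weight_eq_card_sub_add_components {V : Type*} [Fintype V] [DecidableEq V]
    (G : SimpleGraph V) [DecidableRel G.Adj] (hG : G.Connected)
    (W : ℕ) (hW : 2 ≤ W) (w : Sym2 V → ℕ)
    (hw : ∀ e ∈ G.edgeSet, 1 ≤ w e ∧ w e ≤ W)
    (cMST : ℕ)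
    (hmin : IsLeast {x : ℕ | ∃ F : Finset (Sym2 V), F ⊆ G.edgeFinset ∧
        (SimpleGraph.fromEdgeSet (↑F : Set (Sym2 V))).Connected ∧
        (SimpleGraph.fromEdgeSet (↑F : Set (Sym2 V))).IsAcyclic ∧
        x = ∑ e ∈ F, w e} cMST) :
    (cMST : ℤ) = (Fintype.card V : ℤ) - W + ∑ ℓ ∈ Finset.Icc 1 (W - 1),
      (Nat.card (G.deleteEdges {e | ℓ < w e}).ConnectedComponent : ℤ) :=
  mst_weight_eq_card_sub_add_components_general G hG W hW w hw cMST hmin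
end

section
/- Let G be a finite simple graph on a vertex set V with |V| = n, let ε ∈ (0,1) and let t ≥ 1 be an integer, and suppose ε^{2t} n ≥ 16, so that p := (ε^{2t} n / 16)^{−ε} satisfies 0 < p ≤ 1. Let 𝒞 be the family of connected components of G having at most 1/ε vertices and let scc(G) = |𝒞|. Define Y(ω) = Σ_{C ∈ 𝒞} p^{−|C|} · Π_{v ∈ C} ω(v) for ω : V → {0,1}. Then, with respect to the product probability measure μ_p, the probability that |Y − scc(G)| ≥ ε^t n is at most 1/16. -/
open Finset MeasureTheory

/-- The Bernoulli measure on `Bool` with success probability `p`. -/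
noncomputable def bernoulliMeasure (p : ℝ) : Measure Bool :=
  (ENNReal.ofReal p) • Measure.dirac true + (ENNReal.ofReal (1 - p)) • Measure.dirac false

/-- The product measure `μ_p` on `V → Bool`: each coordinate is independently `true`
with probability `p`. -/
noncomputable def muP (V : Type*) [Fintype V] (p : ℝ) : Measure (V → Bool) :=
  Measure.pi fun _ => bernoulliMeasure p

/-!
`Y` is the Horvitz–Thompson estimator of `|𝒞|`, hence unbiased. Distinct components are
disjoint, so their sampling indicators are independent and `Var Y = ∑_{C ∈ 𝒞} (p^{-|C|} - 1)`.
With `x = ε^{2t} n / 16` we have `p^{-|C|} = x^{ε|C|} ≤ x` because `|C| ≤ 1/ε`, and `|𝒞| ≤ n`,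
so `Var Y ≤ n x = (ε^t n)^2 / 16`; Chebyshev's inequality at distance `ε^t n` gives `1/16`.
-/

section Bernoulli

variable {p : ℝ}

instance isFiniteMeasure_ofReal_smul_dirac {α : Type*} [MeasurableSpace α] (c : ℝ) (a : α) :
    IsFiniteMeasure (ENNReal.ofReal c • Measure.dirac a) :=
  ⟨by simp⟩

instance isFiniteMeasure_bernoulliMeasure (p : ℝ) : IsFiniteMeasure (bernoulliMeasure p) := by
  unfold bernoulliMeasure; infer_instance

lemma isProbabilityMeasure_bernoulliMeasure (h0 : 0 ≤ p) (h1 : p ≤ 1) :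
    IsProbabilityMeasure (bernoulliMeasure p) := by
  constructor
  simp [bernoulliMeasure, ← ENNReal.ofReal_add h0 (sub_nonneg.2 h1)]

lemma integral_bernoulliMeasure (h0 : 0 ≤ p) (h1 : p ≤ 1) (f : Bool → ℝ) :
    ∫ b, f b ∂bernoulliMeasure p = p * f true + (1 - p) * f false := by
  rw [bernoulliMeasure, integral_add_measure .of_finite .of_finite]
  simp [integral_smul_measure, ENNReal.toReal_ofReal h0, ENNReal.toReal_ofReal (sub_nonneg.2 h1)]

instance isFiniteMeasure_muP (V : Type*) [Fintype V] (p : ℝ) : IsFiniteMeasure (muP V p) := by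
  unfold muP; infer_instance

lemma isProbabilityMeasure_muP {V : Type*} [Fintype V] (h0 : 0 ≤ p) (h1 : p ≤ 1) :
    IsProbabilityMeasure (muP V p) :=
  have := isProbabilityMeasure_bernoulliMeasure h0 h1
  Measure.pi.instIsProbabilityMeasure _

end Bernoulli

section HorvitzThompson

variable {V : Type*} {p : ℝ}

noncomputable def allSampled (ω : V → Bool) (C : Finset V) : ℝ :=
  ∏ v ∈ C, if ω v then 1 else 0

noncomputable def horvitzThompson (𝒞 : Finset (Finset V)) (p : ℝ) (ω : V → Bool) : ℝ :=
  ∑ C ∈ 𝒞, (p ^ #C)⁻¹ * allSampled ω C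

lemma allSampled_mul_self (ω : V → Bool) (C : Finset V) :
    allSampled ω C * allSampled ω C = allSampled ω C := by
  simp only [allSampled, prod_boole]
  split_ifs <;> norm_num

lemma allSampled_union [DecidableEq V] (ω : V → Bool) {C D : Finset V} (h : Disjoint C D) :
    allSampled ω (C ∪ D) = allSampled ω C * allSampled ω D :=
  prod_union h

variable [Fintype V]

lemma integral_allSampled (h0 : 0 ≤ p) (h1 : p ≤ 1) (S : Finset V) :
    ∫ ω, allSampled ω S ∂muP V p = p ^ #S := by
  have := isProbabilityMeasure_bernoulliMeasure h0 h1
  classical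
  calc ∫ ω, allSampled ω S ∂muP V p
      = ∫ ω, ∏ v, (if v ∈ S then (if ω v then (1 : ℝ) else 0) else 1) ∂muP V p := by
        simp only [allSampled, prod_ite_mem, univ_inter]
    _ = ∏ v, ∫ b, (if v ∈ S then (if b then (1 : ℝ) else 0) else 1) ∂bernoulliMeasure p :=
        integral_fintype_prod_eq_prod (μ := fun _ => bernoulliMeasure p)
          fun v (b : Bool) => if v ∈ S then (if b then (1 : ℝ) else 0) else 1
    _ = ∏ v, if v ∈ S then p else 1 := by
        refine prod_congr rfl fun v _ => ?_
        split_ifs <;> simp [integral_bernoulliMeasure h0 h1]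
    _ = p ^ #S := by rw [prod_ite_mem, univ_inter, prod_const]

lemma integral_horvitzThompson (h0 : 0 < p) (h1 : p ≤ 1) (𝒞 : Finset (Finset V)) :
    ∫ ω, horvitzThompson 𝒞 p ω ∂muP V p = #𝒞 := by
  simp only [horvitzThompson]
  rw [integral_finsetSum _ fun _ _ => .of_finite]
  simp [integral_const_mul, integral_allSampled h0.le h1, (pow_pos h0 _).ne']

lemma integral_weight_mul_allSampled [DecidableEq V] (h0 : 0 < p) (h1 : p ≤ 1)
    {C D : Finset V} (h : C ≠ D → Disjoint C D) :
    ∫ ω, (p ^ #C)⁻¹ * allSampled ω C * ((p ^ #D)⁻¹ * allSampled ω D) ∂muP V p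
      = if C = D then (p ^ #C)⁻¹ else 1 := by
  have hpow : ∀ S : Finset V, p ^ #S ≠ 0 := fun S => (pow_pos h0 _).ne'
  simp_rw [mul_mul_mul_comm _ (allSampled _ C)]
  by_cases hCD : C = D
  · subst hCD
    simp_rw [allSampled_mul_self, integral_const_mul, integral_allSampled h0.le h1, if_pos]
    field_simp [hpow]
  · simp_rw [← allSampled_union _ (h hCD), integral_const_mul, integral_allSampled h0.le h1,
      card_union_of_disjoint (h hCD), pow_add, if_neg hCD]
    field_simp [hpow]

lemma integral_horvitzThompson_sq (h0 : 0 < p) (h1 : p ≤ 1) {𝒞 : Finset (Finset V)}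
    (h𝒞 : (𝒞 : Set (Finset V)).PairwiseDisjoint id) :
    ∫ ω, horvitzThompson 𝒞 p ω ^ 2 ∂muP V p = ∑ C ∈ 𝒞, ((p ^ #C)⁻¹ - 1) + #𝒞 ^ 2 := by
  classical
  have hterm : ∀ C ∈ 𝒞, ∀ D ∈ 𝒞,
      ∫ ω, (p ^ #C)⁻¹ * allSampled ω C * ((p ^ #D)⁻¹ * allSampled ω D) ∂muP V p
        = (if C = D then (p ^ #C)⁻¹ - 1 else 0) + 1 := fun C hC D hD => by
    rw [integral_weight_mul_allSampled h0 h1 (h𝒞 hC hD)]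
    split_ifs <;> ring
  simp_rw [sq, horvitzThompson, sum_mul_sum]
  rw [integral_finsetSum _ fun _ _ => .of_finite]
  simp_rw [integral_finsetSum _ fun _ _ => .of_finite]
  rw [sum_congr rfl fun C hC => sum_congr rfl fun D hD => hterm C hC D hD]
  simp [sum_add_distrib]

lemma variance_horvitzThompson (h0 : 0 < p) (h1 : p ≤ 1) {𝒞 : Finset (Finset V)}
    (h𝒞 : (𝒞 : Set (Finset V)).PairwiseDisjoint id) :
    ProbabilityTheory.variance (horvitzThompson 𝒞 p) (muP V p)
      = ∑ C ∈ 𝒞, ((p ^ #C)⁻¹ - 1) := by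
  have := isProbabilityMeasure_muP (V := V) h0.le h1
  rw [ProbabilityTheory.variance_eq_sub .of_discrete]
  simp only [Pi.pow_apply]
  rw [integral_horvitzThompson_sq h0 h1 h𝒞, integral_horvitzThompson h0 h1]
  ring

lemma muP_abs_horvitzThompson_sub_card_ge_le (h0 : 0 < p) (h1 : p ≤ 1)
    {𝒞 : Finset (Finset V)} (h𝒞 : (𝒞 : Set (Finset V)).PairwiseDisjoint id) {c : ℝ}
    (hc : 0 < c) :
    (muP V p {ω | c ≤ |horvitzThompson 𝒞 p ω - #𝒞|}).toReal
      ≤ (∑ C ∈ 𝒞, ((p ^ #C)⁻¹ - 1)) / c ^ 2 := by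
  have hcheb := ProbabilityTheory.meas_ge_le_variance_div_sq
    (μ := muP V p) (X := horvitzThompson 𝒞 p) .of_discrete hc
  have hnonneg :=
    div_nonneg (ProbabilityTheory.variance_nonneg (horvitzThompson 𝒞 p) (muP V p)) (sq_nonneg c)
  rw [integral_horvitzThompson h0 h1, variance_horvitzThompson h0 h1 h𝒞] at hcheb
  rw [variance_horvitzThompson h0 h1 h𝒞] at hnonneg
  exact ENNReal.toReal_le_of_le_ofReal hnonneg hcheb

end HorvitzThompson

section ConnectedComponent

variable {V : Type*} {G : SimpleGraph V} {𝒞 : Finset (Finset V)}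

lemma pairwiseDisjoint_of_forall_coe_eq_supp
    (h : ∀ C ∈ 𝒞, ∃ c : G.ConnectedComponent, (C : Set V) = c.supp) :
    (𝒞 : Set (Finset V)).PairwiseDisjoint id := by
  intro C hC D hD hCD
  obtain ⟨c, hc⟩ := h C hC
  obtain ⟨d, hd⟩ := h D hD
  have hcd : c ≠ d := by
    rintro rfl
    exact hCD (coe_injective (hc.trans hd.symm))
  rw [Function.onFun, id, id, ← disjoint_coe, hc, hd]
  exact G.pairwise_disjoint_supp_connectedComponent hcd

lemma card_le_card_of_forall_coe_eq_supp [Fintype V]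
    (h : ∀ C ∈ 𝒞, ∃ c : G.ConnectedComponent, (C : Set V) = c.supp) :
    #𝒞 ≤ Fintype.card V := by
  classical
  have hne : ∀ C ∈ 𝒞, (id C).Nonempty := fun C hC => by
    obtain ⟨c, hc⟩ := h C hC
    simpa [← coe_nonempty, hc] using c.nonempty_supp
  calc #𝒞 ≤ #(𝒞.biUnion id) :=
        card_le_card_biUnion (pairwiseDisjoint_of_forall_coe_eq_supp h) hne
    _ ≤ Fintype.card V := card_le_univ _

end ConnectedComponent

lemma inv_pow_rpow_neg_le {x ε : ℝ} (hx : 1 ≤ x) (hε : 0 < ε) {k : ℕ} (hk : (k : ℝ) ≤ 1 / ε) :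
    ((x ^ (-ε)) ^ k)⁻¹ ≤ x := by
  rw [← inv_pow, Real.rpow_neg (by linarith), inv_inv, ← Real.rpow_natCast]
  calc (x ^ ε) ^ (k : ℝ) ≤ (x ^ ε) ^ (1 / ε) :=
        Real.rpow_le_rpow_of_exponent_le (Real.one_le_rpow hx hε.le) hk
    _ = x := by rw [← Real.rpow_mul (by linarith), mul_one_div_cancel hε.ne', Real.rpow_one]

theorem estimator_concentration_general {V : Type*} [Fintype V]
    (G : SimpleGraph V) (n : ℕ) (hn : n = Fintype.card V)
    (ε : ℝ) (hε0 : 0 < ε) (t : ℕ)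
    (h16 : 16 ≤ ε ^ (2 * t) * n)
    (p : ℝ) (hp : p = (ε ^ (2 * t) * n / 16) ^ (-ε))
    (𝒞 : Finset (Finset V))
    (h𝒞 : ∀ C : Finset V, C ∈ 𝒞 ↔
      ((∃ c : G.ConnectedComponent, (C : Set V) = c.supp) ∧ (C.card : ℝ) ≤ 1 / ε)) :
    (muP V p {ω : V → Bool |
        ε ^ t * n ≤ |(∑ C ∈ 𝒞, (p ^ C.card)⁻¹ * ∏ v ∈ C, (if ω v then (1 : ℝ) else 0))
          - (𝒞.card : ℝ)|}).toReal ≤ 1 / 16 := by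
  set x := ε ^ (2 * t) * n / 16 with hx_def
  have hx : 1 ≤ x := by linarith
  have hn0 : (0 : ℝ) < n :=
    pos_of_mul_pos_right (by linarith : 0 < ε ^ (2 * t) * n) (by positivity)
  have hp0 : 0 < p := hp ▸ Real.rpow_pos_of_pos (by linarith) _
  have hp1 : p ≤ 1 := hp ▸ Real.rpow_le_one_of_one_le_of_nonpos hx (by linarith)
  have hsupp : ∀ C ∈ 𝒞, ∃ c : G.ConnectedComponent, (C : Set V) = c.supp :=
    fun C hC => ((h𝒞 C).1 hC).1
  have hweights : ∑ C ∈ 𝒞, ((p ^ #C)⁻¹ - 1) ≤ n * x := calc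
    _ ≤ ∑ _C ∈ 𝒞, x := sum_le_sum fun C hC => by
        have := hp ▸ inv_pow_rpow_neg_le hx hε0 ((h𝒞 C).1 hC).2
        linarith
    _ = #𝒞 * x := by rw [sum_const, nsmul_eq_mul]
    _ ≤ n * x := by
        gcongr
        exact_mod_cast hn ▸ card_le_card_of_forall_coe_eq_supp hsupp
  calc _ ≤ (∑ C ∈ 𝒞, ((p ^ #C)⁻¹ - 1)) / (ε ^ t * n) ^ 2 :=
        muP_abs_horvitzThompson_sub_card_ge_le hp0 hp1
          (pairwiseDisjoint_of_forall_coe_eq_supp hsupp) (by positivity)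
    _ ≤ n * x / (ε ^ t * n) ^ 2 := by gcongr
    _ = 1 / 16 := by
        rw [hx_def]
        field_simp
        ring

/-- Let `𝒞` be the family of connected components of `G` of size at most `1/ε`, and
`scc(G) = |𝒞|`. With `p = (ε^{2t} n / 16)^{-ε}` (where `ε^{2t} n ≥ 16`), the estimator
`Y ω = ∑_{C ∈ 𝒞} p^{-|C|} ∏_{v ∈ C} ω v` satisfies
`μ_p (|Y - scc(G)| ≥ ε^t n) ≤ 1/16`. -/
theorem estimator_concentration {V : Type*} [Fintype V] [DecidableEq V]
    (G : SimpleGraph V) (n : ℕ) (hn : n = Fintype.card V)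
    (ε : ℝ) (hε0 : 0 < ε) (hε1 : ε < 1) (t : ℕ) (ht : 1 ≤ t)
    (h16 : 16 ≤ ε ^ (2 * t) * n)
    (p : ℝ) (hp : p = (ε ^ (2 * t) * n / 16) ^ (-ε))
    (𝒞 : Finset (Finset V))
    (h𝒞 : ∀ C : Finset V, C ∈ 𝒞 ↔
      ((∃ c : G.ConnectedComponent, (C : Set V) = c.supp) ∧ (C.card : ℝ) ≤ 1 / ε)) :
    (muP V p {ω : V → Bool |
        ε ^ t * n ≤ |(∑ C ∈ 𝒞, (p ^ C.card)⁻¹ * ∏ v ∈ C, (if ω v then (1 : ℝ) else 0))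
          - (𝒞.card : ℝ)|}).toReal ≤ 1 / 16 :=
  estimator_concentration_general G n hn ε hε0 t h16 p hp 𝒞 h𝒞
end

section
/- Let G be a finite simple graph on a vertex set V with |V| = n, let ε > 0 with εn ≥ 10, and let p := (εn/10)^{−ε}, so that 0 < p ≤ 1. Suppose G has at least εn connected components. Then, with respect to the product probability measure μ_p on functions ω : V → {0,1}, the probability that at least one connected component of G is fully sampled by ω is at least 15/16. -/
open Finset MeasureTheory

instance (p : ℝ) : IsFiniteMeasure (bernoulliMeasure p) := by
  constructor
  simp [bernoulliMeasure]

lemma singleton_eq_pi {V : Type*} [Fintype V] (ω : V → Bool) :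
    ({ω} : Set (V → Bool)) = Set.univ.pi (fun v => {ω v}) := by
  ext x; simp [funext_iff, Set.mem_pi, eq_comm]

lemma measurableSet_all {V : Type*} [Fintype V] (S : Set (V → Bool)) : MeasurableSet S := by
  have h1 : ∀ ω : V → Bool, MeasurableSet ({ω} : Set (V → Bool)) := by
    intro ω
    rw [singleton_eq_pi]
    exact MeasurableSet.univ_pi fun v => trivial
  have h2 : S = ⋃ ω ∈ S, {ω} := by simp
  rw [h2]
  exact MeasurableSet.biUnion (Set.to_countable _) fun ω _ => h1 ω

lemma bernoulli_singleton (p : ℝ) (b : Bool) :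
    bernoulliMeasure p {b} = ENNReal.ofReal (if b then p else 1 - p) := by
  cases b <;> simp [bernoulliMeasure, Measure.dirac_apply]

lemma muP_singleton {V : Type*} [Fintype V] (p : ℝ) (h0 : 0 ≤ p) (h1 : p ≤ 1) (ω : V → Bool) :
    muP V p {ω} = ENNReal.ofReal (∏ v, if ω v then p else 1 - p) := by
  rw [singleton_eq_pi, muP, Measure.pi_pi,
    ENNReal.ofReal_prod_of_nonneg (fun v _ => by split <;> linarith)]
  exact Finset.prod_congr rfl fun v _ => (bernoulli_singleton p (ω v) ▸ rfl)

lemma muP_finset {V : Type*} [Fintype V] (p : ℝ) (h0 : 0 ≤ p) (h1 : p ≤ 1)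
    (S : Finset (V → Bool)) :
    muP V p ↑S = ENNReal.ofReal (∑ ω ∈ S, ∏ v, if ω v then p else 1 - p) := by
  rw [ENNReal.ofReal_sum_of_nonneg
    (fun ω _ => Finset.prod_nonneg fun v _ => by split <;> linarith)]
  have h2 : (↑S : Set (V → Bool)) = ⋃ ω ∈ S, {ω} := by ext x; simp
  rw [h2, measure_biUnion_finset ?_ fun ω _ => measurableSet_all _]
  · exact Finset.sum_congr rfl fun ω _ => muP_singleton p h0 h1 ω
  · intro x hx y hy hxy
    exact Set.disjoint_singleton.mpr hxy

example {V : Type*} [Fintype V] (G : SimpleGraph V) : Finite G.ConnectedComponent :=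
  inferInstance

lemma factor_lemma {V κ : Type*} [Fintype V] [Fintype κ] [DecidableEq κ] [DecidableEq V]
    (π : V → κ) (w : Bool → ℝ) (hw : w true + w false = 1) :
    ∑ ω ∈ univ.filter (fun ω : V → Bool => ∀ c : κ, ∃ v : {v // π v = c}, ω v.1 ≠ true),
      ∏ v, w (ω v)
    = ∏ c : κ, (1 - w true ^ (Fintype.card {v // π v = c})) := by
  classical
  set t : ∀ c : κ, Finset ({v // π v = c} → Bool) :=
    fun c => univ.filter (fun g => ∃ v, g v ≠ true) with ht
  set f : ∀ c : κ, ({v // π v = c} → Bool) → ℝ := fun c g => ∏ v, w (g v) with hf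
  have step1 : ∀ c : κ, ∑ g ∈ t c, f c g = 1 - w true ^ (Fintype.card {v // π v = c}) := by
    intro c
    have htot : ∑ g : {v // π v = c} → Bool, f c g = 1 := by
      have h1 : ∏ v : {v // π v = c}, ∑ b ∈ (univ : Finset Bool), w b
          = ∑ x ∈ Fintype.piFinset (fun _ => (univ : Finset Bool)), ∏ v, w (x v) :=
        Finset.prod_univ_sum _ _
      rw [Fintype.piFinset_univ] at h1
      rw [hf]; dsimp only
      rw [← h1]
      simp [Fintype.sum_bool, hw]
    have hte : t c = univ.erase (fun _ => true) := by
      ext g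
      simp only [ht, mem_filter, mem_univ, true_and, mem_erase, and_true]
      rw [Ne, funext_iff]
      push_neg
      rfl
    have h2 := Finset.sum_erase_add univ (f c) (Finset.mem_univ (fun _ : {v // π v = c} => true))
    have h3 : f c (fun _ => true) = w true ^ (Fintype.card {v // π v = c}) := by
      simp [hf, Finset.prod_const]
    rw [htot] at h2
    rw [hte]
    linarith
  have step2 : ∏ c : κ, (∑ g ∈ t c, f c g)
      = ∑ G ∈ Fintype.piFinset t, ∏ c, f c (G c) := Finset.prod_univ_sum t f
  have step3 : ∑ G ∈ Fintype.piFinset t, ∏ c, f c (G c)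
      = ∑ ω ∈ univ.filter (fun ω : V → Bool => ∀ c : κ, ∃ v : {v // π v = c}, ω v.1 ≠ true),
          ∏ v, w (ω v) := by
    refine Finset.sum_nbij' (fun G => fun v => G (π v) ⟨v, rfl⟩)
      (fun ω => fun c v => ω v.1) ?_ ?_ ?_ ?_ ?_
    · intro G hG
      rw [Fintype.mem_piFinset] at hG
      simp only [mem_filter, mem_univ, true_and]
      intro c
      obtain ⟨v, hv⟩ : ∃ v : {v // π v = c}, G c v ≠ true := by
        have := hG c; simpa [ht] using this
      refine ⟨v, ?_⟩
      obtain ⟨x, hx⟩ := v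
      subst hx
      exact hv
    · intro ω hω
      rw [Fintype.mem_piFinset]
      intro c
      simp only [mem_filter, mem_univ, true_and] at hω
      simpa [ht] using hω c
    · intro G hG
      funext c v
      obtain ⟨x, hx⟩ := v
      subst hx
      rfl
    · intro ω hω
      rfl
    · intro G hG
      rw [Fintype.mem_piFinset] at hG
      have := (Fintype.prod_fiberwise π (fun v => w ((fun u => G (π u) ⟨u, rfl⟩) v))).symm
      rw [this]
      refine Finset.prod_congr rfl fun c _ => ?_
      refine Finset.prod_congr rfl fun v _ => ?_
      obtain ⟨x, hx⟩ := v
      subst hx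
      rfl
  rw [← step3, ← step2]
  exact Finset.prod_congr rfl fun c _ => step1 c

lemma total_one {V : Type*} [Fintype V] [DecidableEq V] (w : Bool → ℝ) (hw : w true + w false = 1) :
    ∑ ω : V → Bool, ∏ v, w (ω v) = 1 := by
  classical
  have h1 : ∏ v : V, ∑ b ∈ (univ : Finset Bool), w b
      = ∑ x ∈ Fintype.piFinset (fun _ => (univ : Finset Bool)), ∏ v, w (x v) :=
    Finset.prod_univ_sum _ _
  rw [Fintype.piFinset_univ] at h1
  rw [← h1]
  simp [Fintype.sum_bool, hw]

-- analytic lemma: sum of p^{s c} ≥ 10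
lemma sum_pow_ge (n m : ℕ) (ε p : ℝ) (hε0 : 0 < ε) (h10 : 10 ≤ ε * n)
    (hp : p = (ε * n / 10) ^ (-ε)) {κ : Type*} [Fintype κ] (s : κ → ℕ)
    (hs : ∑ c, s c = n) (hm : m = Fintype.card κ) (hcc : ε * n ≤ (m : ℝ)) :
    10 ≤ ∑ c, p ^ (s c) := by
  have hn0 : 0 < (n : ℝ) := by
    rcases Nat.eq_zero_or_pos n with h | h
    · simp [h] at h10; linarith
    · exact_mod_cast h
  have hbase : (1:ℝ) ≤ ε * n / 10 := by linarith
  have hbase0 : (0:ℝ) < ε * n / 10 := by linarith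
  have hp0 : 0 < p := by rw [hp]; exact Real.rpow_pos_of_pos hbase0 _
  have hp1 : p ≤ 1 := by rw [hp]; exact Real.rpow_le_one_of_one_le_of_nonpos hbase (by linarith)
  have hm0 : (0:ℝ) < m := by linarith
  -- AM-GM
  have amgm := Real.geom_mean_le_arith_mean_weighted univ (fun _ => (1:ℝ)/m)
    (fun c => p ^ (s c)) (fun i _ => by positivity)
    (by
      rw [Finset.sum_const, Finset.card_univ, ← hm, nsmul_eq_mul, mul_one_div,
        div_self (ne_of_gt hm0)]) (fun i _ => by positivity)
  have hprod : ∏ c, ((p : ℝ) ^ (s c)) ^ ((1:ℝ)/m) = p ^ ((n : ℝ)/m) := by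
    rw [Real.finset_prod_rpow _ _ (fun c _ => by positivity)]
    rw [Finset.prod_pow_eq_pow_sum, hs, ← Real.rpow_natCast p n, ← Real.rpow_mul hp0.le]
    ring_nf
  rw [hprod] at amgm
  have hsum : ∑ c, ((1:ℝ)/m) * p ^ (s c) = (1/m) * ∑ c, p ^ (s c) := by
    rw [Finset.mul_sum]
  rw [hsum] at amgm
  -- p ^ (n/m) ≥ 10/(ε n)
  have hexp : (n : ℝ)/m ≤ 1/ε := by
    rw [div_le_div_iff₀ hm0 hε0]
    calc (n:ℝ) * ε = ε * n := by ring
    _ ≤ m := hcc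
    _ = m * 1 := by ring
    _ ≤ 1 * m := by linarith
  have hge : p ^ ((1:ℝ)/ε) ≤ p ^ ((n:ℝ)/m) :=
    Real.rpow_le_rpow_of_exponent_ge hp0 hp1 hexp
  have hval : p ^ ((1:ℝ)/ε) = 10/(ε * n) := by
    rw [hp, ← Real.rpow_mul hbase0.le]
    have : -ε * (1/ε) = -1 := by field_simp
    rw [this, Real.rpow_neg_one]
    field_simp
  have h1 : 10/(ε*n) ≤ (1/m) * ∑ c, p ^ (s c) := by
    calc 10/(ε*n) = p ^ ((1:ℝ)/ε) := hval.symm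
    _ ≤ p ^ ((n:ℝ)/m) := hge
    _ ≤ _ := amgm
  have h2 : m * (10/(ε*n)) ≤ ∑ c, p ^ (s c) := by
    have := mul_le_mul_of_nonneg_left h1 hm0.le
    calc (m:ℝ) * (10/(ε*n)) ≤ m * ((1/m) * ∑ c, p ^ (s c)) := this
    _ = ∑ c, p ^ (s c) := by field_simp
  calc (10:ℝ) = (ε*n) * (10/(ε*n)) := by field_simp
  _ ≤ m * (10/(ε*n)) := by
      apply mul_le_mul_of_nonneg_right hcc
      positivity
  _ ≤ _ := h2

/-- If `G` has at least `ε n` connected components and vertices are sampled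
independently with probability `p = (ε n / 10)^{-ε}` (where `ε n ≥ 10`), then with
probability at least `15/16` some connected component is fully sampled. -/
theorem prob_some_component_fully_sampled {V : Type*} [Fintype V]
    (G : SimpleGraph V) (n : ℕ) (hn : n = Fintype.card V)
    (ε : ℝ) (hε0 : 0 < ε) (h10 : 10 ≤ ε * n)
    (p : ℝ) (hp : p = (ε * n / 10) ^ (-ε))
    (hcc : ε * n ≤ (Nat.card G.ConnectedComponent : ℝ)) :
    15 / 16 ≤ (muP V p
      {ω : V → Bool | ∃ c : G.ConnectedComponent, ∀ v ∈ c.supp, ω v = true}).toReal := by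
  classical
  letI : Fintype G.ConnectedComponent := Fintype.ofFinite _
  set κ := G.ConnectedComponent
  set π : V → κ := G.connectedComponentMk with hπ
  -- basic bounds
  have hn0 : 0 < (n : ℝ) := by
    rcases Nat.eq_zero_or_pos n with h | h
    · rw [h] at h10; simp at h10; linarith
    · exact_mod_cast h
  have hbase : (1:ℝ) ≤ ε * n / 10 := by linarith
  have hbase0 : (0:ℝ) < ε * n / 10 := by linarith
  have hp0 : 0 < p := by rw [hp]; exact Real.rpow_pos_of_pos hbase0 _
  have hp1 : p ≤ 1 := by rw [hp]; exact Real.rpow_le_one_of_one_le_of_nonpos hbase (by linarith)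
  set w : Bool → ℝ := fun b => if b then p else 1 - p with hwdef
  have hw : w true + w false = 1 := by simp [hwdef]
  -- the event as a finset
  set T : Finset (V → Bool) :=
    univ.filter (fun ω => ∃ c : κ, ∀ v ∈ c.supp, ω v = true) with hT
  have hset : {ω : V → Bool | ∃ c : κ, ∀ v ∈ c.supp, ω v = true} = ↑T := by
    ext ω; simp [hT]
  have hμ : (muP V p
      {ω : V → Bool | ∃ c : κ, ∀ v ∈ c.supp, ω v = true}).toReal
      = ∑ ω ∈ T, ∏ v, w (ω v) := by
    rw [hset, muP_finset p hp0.le hp1, ENNReal.toReal_ofReal]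
    exact Finset.sum_nonneg fun ω _ => Finset.prod_nonneg fun v _ => by
      split <;> linarith
  rw [hμ]
  -- complement
  set F : Finset (V → Bool) :=
    univ.filter (fun ω => ¬ ∃ c : κ, ∀ v ∈ c.supp, ω v = true) with hF
  have hsplit : ∑ ω ∈ T, ∏ v, w (ω v) + ∑ ω ∈ F, ∏ v, w (ω v)
      = ∑ ω : V → Bool, ∏ v, w (ω v) :=
    Finset.sum_filter_add_sum_filter_not univ _ _
  rw [total_one w hw] at hsplit
  -- identify F with the factorized filter
  have hFeq : F = univ.filter
      (fun ω : V → Bool => ∀ c : κ, ∃ v : {v // π v = c}, ω v.1 ≠ true) := by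
    ext ω
    simp only [hF, mem_filter, mem_univ, true_and]
    push_neg
    constructor
    · intro h c
      obtain ⟨v, hv1, hv2⟩ := h c
      exact ⟨⟨v, (SimpleGraph.ConnectedComponent.mem_supp_iff c v).mp hv1⟩, hv2⟩
    · intro h c
      obtain ⟨v, hv⟩ := h c
      exact ⟨v.1, (SimpleGraph.ConnectedComponent.mem_supp_iff c v.1).mpr v.2, hv⟩
  set s : κ → ℕ := fun c => Fintype.card {v // π v = c} with hs
  have hfact : ∑ ω ∈ F, ∏ v, w (ω v) = ∏ c : κ, (1 - w true ^ (s c)) := by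
    rw [hFeq]
    exact factor_lemma π w hw
  have hwt : w true = p := by simp [hwdef]
  -- sum of fiber cards
  have hsumcard : ∑ c, s c = n := by
    have h1 : ∑ c : κ, ∑ _v : {v // π v = c}, 1 = ∑ _v : V, 1 :=
      Fintype.sum_fiberwise π (fun _ => (1:ℕ))
    simp only [Finset.sum_const, Finset.card_univ, smul_eq_mul, mul_one] at h1
    rw [hn]
    exact h1
  -- sum of p powers at least 10
  have hm : (ε * n : ℝ) ≤ (Fintype.card κ : ℝ) := by
    rwa [Nat.card_eq_fintype_card] at hcc
  have hkey : 10 ≤ ∑ c, p ^ (s c) :=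
    sum_pow_ge n (Fintype.card κ) ε p hε0 h10 hp s hsumcard rfl hm
  -- failure probability bound
  have hfail : ∏ c : κ, (1 - w true ^ (s c)) ≤ 1/16 := by
    rw [hwt]
    have h1 : ∏ c : κ, (1 - p ^ (s c)) ≤ ∏ c : κ, Real.exp (-(p ^ (s c))) := by
      apply Finset.prod_le_prod
      · intro c _
        have : p ^ (s c) ≤ 1 := pow_le_one₀ hp0.le hp1
        linarith
      · intro c _
        have := Real.add_one_le_exp (-(p ^ (s c)))
        linarith
    have h2 : ∏ c : κ, Real.exp (-(p ^ (s c))) = Real.exp (-∑ c, p ^ (s c)) := by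
      rw [← Real.exp_sum]
      congr 1
      rw [Finset.sum_neg_distrib]
    have h3 : Real.exp (-∑ c, p ^ (s c)) ≤ Real.exp (-10) := by
      apply Real.exp_le_exp.mpr
      linarith
    have h4 : Real.exp (-10) ≤ 1/16 := by
      have he : (2:ℝ) ≤ Real.exp 1 := by
        have := Real.exp_one_gt_d9; norm_num at this ⊢; linarith
      have h5 : (2:ℝ)^(10:ℕ) ≤ Real.exp 1 ^ (10:ℕ) := pow_le_pow_left₀ (by norm_num) he 10
      have hh : Real.exp 1 ^ (10:ℕ) = Real.exp 10 := by
        rw [← Real.exp_nat_mul]; norm_num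
      have h16 : (16:ℝ) ≤ Real.exp 10 := by rw [← hh]; norm_num at h5 ⊢; linarith
      rw [Real.exp_neg, one_div]
      exact inv_anti₀ (by norm_num) h16
    linarith
  rw [hfact] at hsplit
  linarith
end
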